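/- Let $h \ge 2$ and let $d_1, \ldots, d_h$ be nonnegative real numbers. Let $R$ be a positive real number with $R > \sum_{i=1}^h d_i + \frac{\prod_{i=1}^h d_i}{(h-1)!}$. Then $R^h - \left(\sum_{i=1}^h d_i + \frac{\prod_{i=1}^h d_i}{(h-1)!}\right) R^{h-1} + \sum_{i=2}^h (-1)^i \sigma_i(d_1,\ldots,d_h) R^{h-i} > 0$, where $\sigma_i$ denotes the $i$th elementary symmetric polynomial. -/

import Mathlib

/-!
Expanding `∏ i, (R - d i)` by Vieta's formulas shows that the left-hand side equals
`∏ i, (R - d i) - (∏ i, d i) / (h - 1)! * R ^ (h - 1)`. Since `0 ≤ d i ≤ R`, the Weierstrass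
product inequality gives `∏ i, (R - d i) ≥ R ^ (h - 1) * (R - ∑ i, d i)`, and the hypothesis on
`R` says exactly that this exceeds `(∏ i, d i) / (h - 1)! * R ^ (h - 1)`.
-/

/-- The `i`th elementary symmetric polynomial evaluated at `d : Fin h → ℝ`. -/
def esymm (h i : ℕ) (d : Fin h → ℝ) : ℝ :=
  ∑ s ∈ Finset.powersetCard i (Finset.univ : Finset (Fin h)), ∏ j ∈ s, d j

open Finset

theorem Finset.pow_card_mul_sub_sum_le_mul_prod_sub {ι R : Type*} [CommRing R] [LinearOrder R]
    [IsStrictOrderedRing R] (s : Finset ι) {d : ι → R} {x : R} (hd : ∀ i ∈ s, 0 ≤ d i)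
    (hdx : ∀ i ∈ s, d i ≤ x) :
    x ^ #s * (x - ∑ i ∈ s, d i) ≤ x * ∏ i ∈ s, (x - d i) := by
  induction s using Finset.cons_induction with
  | empty => simp
  | cons a s ha ih =>
    simp only [forall_mem_cons] at hd hdx
    have hx : 0 ≤ x := hd.1.trans hdx.1
    have hsum : 0 ≤ ∑ i ∈ s, d i := sum_nonneg hd.2
    rw [card_cons, sum_cons, prod_cons, pow_succ]
    calc x ^ #s * x * (x - (d a + ∑ i ∈ s, d i))
        ≤ (x - d a) * (x ^ #s * (x - ∑ i ∈ s, d i)) := by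
          nlinarith [mul_nonneg (pow_nonneg hx #s) (mul_nonneg hd.1 hsum)]
      _ ≤ (x - d a) * (x * ∏ i ∈ s, (x - d i)) :=
          mul_le_mul_of_nonneg_left (ih hd.2 hdx.2) (sub_nonneg.2 hdx.1)
      _ = x * ((x - d a) * ∏ i ∈ s, (x - d i)) := by ring

theorem esymm_zero {h : ℕ} (d : Fin h → ℝ) : esymm h 0 d = 1 := by
  simp [esymm]

theorem esymm_one {h : ℕ} (d : Fin h → ℝ) : esymm h 1 d = ∑ i, d i := by
  simp [esymm, powersetCard_one]

theorem prod_sub_eq_sum_esymm {h : ℕ} (d : Fin h → ℝ) (x : ℝ) :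
    ∏ i, (x - d i) = ∑ i ∈ range (h + 1), (-1) ^ i * esymm h i d * x ^ (h - i) := by
  have vieta := congrArg (Polynomial.eval x)
    (Multiset.prod_X_sub_X_eq_sum_esymm (univ.val.map d))
  simp only [Multiset.map_map, Function.comp_def, Polynomial.eval_multiset_prod,
    Polynomial.eval_finsetSum, Polynomial.eval_sub, Polynomial.eval_X, Polynomial.eval_C,
    Polynomial.eval_mul, Polynomial.eval_pow, Polynomial.eval_neg, Polynomial.eval_one,
    Multiset.card_map, Finset.esymm_map_val, card_val, card_univ, Fintype.card_fin] at vieta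
  rw [Finset.prod_eq_multiset_prod, vieta]
  simp only [esymm, mul_assoc]

theorem prod_sub_eq_pow_sub_sum_mul_add {h : ℕ} (hh : 2 ≤ h) (d : Fin h → ℝ) (x : ℝ) :
    ∏ i, (x - d i) = x ^ h - (∑ i, d i) * x ^ (h - 1) +
      ∑ i ∈ Icc 2 h, (-1) ^ i * esymm h i d * x ^ (h - i) := by
  rw [prod_sub_eq_sum_esymm, range_eq_Ico, ← sum_Ico_consecutive _ (Nat.zero_le 2) (by omega),
    Ico_add_one_right_eq_Icc, ← range_eq_Ico]
  simp only [sum_range_succ, range_one, sum_singleton, pow_zero, esymm_zero, mul_one, tsub_zero,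
    one_mul, pow_one, esymm_one, neg_mul]
  ring

theorem stmt_7 (h : ℕ) (hh : 2 ≤ h) (d : Fin h → ℝ) (hd : ∀ i, 0 ≤ d i)
    (R : ℝ) (hR0 : 0 < R)
    (hR : R > (∑ i, d i) + (∏ i, d i) / (h - 1).factorial) :
    R ^ h - ((∑ i, d i) + (∏ i, d i) / (h - 1).factorial) * R ^ (h - 1) +
      ∑ i ∈ Finset.Icc 2 h, (-1 : ℝ) ^ i * esymm h i d * R ^ (h - i) > 0 := by
  have hP : 0 ≤ (∏ i, d i) / (h - 1).factorial :=
    div_nonneg (prod_nonneg fun i _ => hd i) (Nat.cast_nonneg _)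
  have hdR : ∀ i, d i ≤ R := fun i =>
    (single_le_sum (fun j _ => hd j) (mem_univ i)).trans (by linarith)
  have weierstrass : R ^ (h - 1) * (R - ∑ i, d i) ≤ ∏ i, (R - d i) := by
    have := univ.pow_card_mul_sub_sum_le_mul_prod_sub (fun i _ => hd i) (fun i _ => hdR i)
    rw [card_univ, Fintype.card_fin,
      show R ^ h = R * R ^ (h - 1) by rw [← pow_succ', Nat.sub_add_cancel (by omega)],
      mul_assoc] at this
    exact le_of_mul_le_mul_left this hR0
  have gap : (∏ i, d i) / (h - 1).factorial * R ^ (h - 1) < R ^ (h - 1) * (R - ∑ i, d i) := by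
    rw [mul_comm]
    exact mul_lt_mul_of_pos_left (by linarith) (by positivity)
  rw [prod_sub_eq_pow_sub_sum_mul_add hh] at weierstrass
  linarith
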